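/- arXiv:0907.1205 — 2 statements merged into one kernel-verified Lean document; each statement's English description precedes it below -/
import Mathlib

section
/- Let U_s be the repulsive Coulomb potential on ℝ^{3M} with singular set S and minimal nonzero coefficient m. Then U_s is smooth on ℝ^{3M} \ S and its gradient satisfies the pointwise bound |∇U_s(x)| ≤ (√2/m) · U_s(x)² for every x ∈ ℝ^{3M} \ S. -/
open MeasureTheory Filter

/-- The difference `R_α − R_β ∈ ℝ³` of the nuclear positions encoded in
`x = (R_1, …, R_M) ∈ ℝ^{3M}`. -/
noncomputable def Rdiff (M : ℕ) (x : EuclideanSpace ℝ (Fin M × Fin 3)) (α β : Fin M) :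
    EuclideanSpace ℝ (Fin 3) := WithLp.toLp 2 (fun j => x (α, j) - x (β, j))

/-- The repulsive Coulomb potential `U_s(x) = Σ_{α<β} C_{αβ}/|R_α−R_β|` on `ℝ^{3M}`. -/
noncomputable def coulombUs (M : ℕ) (C : Fin M → Fin M → ℝ)
    (x : EuclideanSpace ℝ (Fin M × Fin 3)) : ℝ :=
  ∑ q ∈ Finset.univ.filter (fun q : Fin M × Fin M => q.1 < q.2),
    C q.1 q.2 / ‖Rdiff M x q.1 q.2‖

/-- The singular set `S = {x : R_α = R_β for some α<β with C_{αβ} > 0}`. -/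
def singSet (M : ℕ) (C : Fin M → Fin M → ℝ) : Set (EuclideanSpace ℝ (Fin M × Fin 3)) :=
  {x | ∃ α β : Fin M, α < β ∧ 0 < C α β ∧ Rdiff M x α β = 0}

/-- `Rdiff` as a continuous linear map. -/
noncomputable def RdiffL (M : ℕ) (α β : Fin M) :
    EuclideanSpace ℝ (Fin M × Fin 3) →L[ℝ] EuclideanSpace ℝ (Fin 3) :=
  LinearMap.toContinuousLinearMap
    { toFun := fun x => Rdiff M x α β
      map_add' := by
        intro x y; ext j
        simp [Rdiff, PiLp.add_apply]; ring
      map_smul' := by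
        intro c x; ext j
        simp [Rdiff, PiLp.smul_apply, smul_eq_mul]; ring }

lemma RdiffL_apply (M : ℕ) (α β : Fin M) (x : EuclideanSpace ℝ (Fin M × Fin 3)) :
    RdiffL M α β x = Rdiff M x α β := rfl

lemma RdiffL_norm_le (M : ℕ) (α β : Fin M) (hab : α ≠ β) :
    ‖RdiffL M α β‖ ≤ Real.sqrt 2 := by
  refine ContinuousLinearMap.opNorm_le_bound _ (Real.sqrt_nonneg 2) fun v => ?_
  rw [RdiffL_apply, EuclideanSpace.norm_eq, EuclideanSpace.norm_eq,
    ← Real.sqrt_mul (by norm_num : (0:ℝ) ≤ 2)]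
  apply Real.sqrt_le_sqrt
  simp only [Real.norm_eq_abs, sq_abs]
  have h1 : ∀ j : Fin 3, (Rdiff M v α β j) ^ 2 ≤ 2 * (v (α, j) ^ 2 + v (β, j) ^ 2) := by
    intro j
    have : Rdiff M v α β j = v (α, j) - v (β, j) := rfl
    rw [this]
    nlinarith [sq_nonneg (v (α, j) + v (β, j))]
  calc ∑ j : Fin 3, (Rdiff M v α β j) ^ 2
      ≤ ∑ j : Fin 3, 2 * (v (α, j) ^ 2 + v (β, j) ^ 2) :=
        Finset.sum_le_sum fun j _ => h1 j
    _ = 2 * ((∑ j : Fin 3, v (α, j) ^ 2) + ∑ j : Fin 3, v (β, j) ^ 2) := by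
        rw [← Finset.mul_sum, Finset.sum_add_distrib]
    _ ≤ 2 * ∑ p : Fin M × Fin 3, v p ^ 2 := by
        gcongr
        have : ((∑ j : Fin 3, v (α, j) ^ 2) + ∑ j : Fin 3, v (β, j) ^ 2)
            = ∑ i ∈ ({α, β} : Finset (Fin M)), ∑ j : Fin 3, v (i, j) ^ 2 := by
          rw [Finset.sum_pair hab]
        rw [this, Fintype.sum_prod_type]
        exact Finset.sum_le_sum_of_subset_of_nonneg (Finset.subset_univ _)
          (fun i _ _ => Finset.sum_nonneg fun j _ => sq_nonneg _)

set_option maxHeartbeats 1000000 in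
/-- Derivative bound for a single Coulomb term. -/
lemma coulomb_term_deriv (M : ℕ) (α β : Fin M) (hab : α ≠ β) (c : ℝ) (hc : 0 ≤ c)
    (x : EuclideanSpace ℝ (Fin M × Fin 3)) (hx : c ≠ 0 → Rdiff M x α β ≠ 0) :
    ∃ D : EuclideanSpace ℝ (Fin M × Fin 3) →L[ℝ] ℝ,
      HasFDerivAt (fun y => c / ‖Rdiff M y α β‖) D x ∧
      ‖D‖ ≤ Real.sqrt 2 * (c / ‖Rdiff M x α β‖ ^ 2) := by
  rcases eq_or_lt_of_le hc with hc0 | hc0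
  · refine ⟨0, ?_, ?_⟩
    · have : (fun y : EuclideanSpace ℝ (Fin M × Fin 3) => c / ‖Rdiff M y α β‖)
          = fun _ => (0 : ℝ) := by
        funext y; rw [← hc0, zero_div]
      rw [this]; exact hasFDerivAt_const 0 x
    · simp only [norm_zero, ← hc0, zero_div, mul_zero, le_refl]
  · set L := RdiffL M α β with hL
    have hLx : L x ≠ 0 := by rw [RdiffL_apply]; exact hx hc0.ne'
    have hr : (0 : ℝ) < ‖L x‖ := norm_pos_iff.2 hLx
    have hn : DifferentiableAt ℝ (norm : EuclideanSpace ℝ (Fin 3) → ℝ) (L x) :=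
      (contDiffAt_norm (n := 1) ℝ hLx).differentiableAt one_ne_zero
    set N := fderiv ℝ (norm : EuclideanSpace ℝ (Fin 3) → ℝ) (L x) with hNdef
    have hN : HasFDerivAt (norm : EuclideanSpace ℝ (Fin 3) → ℝ) N (L x) := hn.hasFDerivAt
    have hNle : ‖N‖ ≤ 1 := by
      simpa using norm_fderiv_le_of_lipschitz ℝ (lipschitzWith_one_norm
        (E := EuclideanSpace ℝ (Fin 3)))
    have hg : HasFDerivAt (fun y => ‖L y‖) (N.comp L) x := hN.comp x L.hasFDerivAt
    have hinv : HasDerivAt (fun t : ℝ => c * t⁻¹) (c * (-(‖L x‖ ^ 2)⁻¹)) ‖L x‖ :=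
      (hasDerivAt_inv hr.ne').const_mul c
    have hmul : HasFDerivAt (fun y => c * (‖L y‖)⁻¹)
        ((c * (-(‖L x‖ ^ 2)⁻¹)) • N.comp L) x := hinv.comp_hasFDerivAt (h₂ := fun t : ℝ => c * t⁻¹) x hg
    refine ⟨(c * (-(‖L x‖ ^ 2)⁻¹)) • N.comp L, ?_, ?_⟩
    · have : (fun y : EuclideanSpace ℝ (Fin M × Fin 3) => c / ‖Rdiff M y α β‖)
          = fun y => c * (‖L y‖)⁻¹ := by
        funext y; rw [div_eq_mul_inv, RdiffL_apply]
      rw [this]; exact hmul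
    · have hcomp : ‖N.comp L‖ ≤ 1 * Real.sqrt 2 :=
        le_trans (ContinuousLinearMap.opNorm_comp_le _ _)
          (mul_le_mul hNle (RdiffL_norm_le M α β hab) (norm_nonneg _) zero_le_one)
      rw [RdiffL_apply] at hr
      calc ‖(c * (-(‖L x‖ ^ 2)⁻¹)) • N.comp L‖
          ≤ ‖c * (-(‖L x‖ ^ 2)⁻¹)‖ * ‖N.comp L‖ := norm_smul_le (c * (-(‖L x‖ ^ 2)⁻¹)) (N.comp L)
        _ = c * (‖L x‖ ^ 2)⁻¹ * ‖N.comp L‖ := by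
            rw [Real.norm_eq_abs, abs_mul, abs_neg, abs_inv, abs_of_nonneg hc,
              abs_of_nonneg (sq_nonneg _)]
        _ ≤ c * (‖L x‖ ^ 2)⁻¹ * (1 * Real.sqrt 2) := by
            have h0 : (0:ℝ) ≤ c * (‖L x‖ ^ 2)⁻¹ := by positivity
            exact mul_le_mul_of_nonneg_left hcomp h0
        _ = Real.sqrt 2 * (c / ‖Rdiff M x α β‖ ^ 2) := by
            rw [div_eq_mul_inv, ← RdiffL_apply M α β x]; ring

/-- `U_s` is smooth away from its singular set `S`, and its gradient satisfies the
pointwise bound `|∇U_s(x)| ≤ (√2/m) U_s(x)²` on `ℝ^{3M} \ S`, where `m` is a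
(positive) lower bound for the nonzero coefficients `C_{αβ}` — in particular one may
take `m = min{C_{αβ} : C_{αβ} > 0}`. -/
theorem coulomb_gradient_bound (M : ℕ) (hM : 2 ≤ M) (C : Fin M → Fin M → ℝ)
    (hC : ∀ α β : Fin M, 0 ≤ C α β)
    (hne : ∃ α β : Fin M, α < β ∧ 0 < C α β)
    (m : ℝ) (hm : 0 < m)
    (hmle : ∀ α β : Fin M, α < β → 0 < C α β → m ≤ C α β) :
    ContDiffOn ℝ (⊤ : ℕ∞) (coulombUs M C) (singSet M C)ᶜ ∧
      ∀ x ∉ singSet M C,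
        ‖gradient (coulombUs M C) x‖ ≤ (Real.sqrt 2 / m) * (coulombUs M C x) ^ 2 := by
  classical
  set P := Finset.univ.filter (fun q : Fin M × Fin M => q.1 < q.2) with hP
  -- on the complement of S, each relevant Rdiff is nonzero when C > 0
  have hkey : ∀ x ∉ singSet M C, ∀ q ∈ P, C q.1 q.2 ≠ 0 → Rdiff M x q.1 q.2 ≠ 0 := by
    intro x hx q hq hCq h0
    exact hx ⟨q.1, q.2, (Finset.mem_filter.1 hq).2, (hC q.1 q.2).lt_of_ne (Ne.symm hCq), h0⟩
  constructor
  · intro x hx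
    apply ContDiffAt.contDiffWithinAt
    have : ContDiffAt ℝ (⊤ : ℕ∞)
        (fun y => ∑ q ∈ P, C q.1 q.2 / ‖Rdiff M y q.1 q.2‖) x := by
      apply ContDiffAt.sum
      intro q hq
      rcases eq_or_lt_of_le (hC q.1 q.2) with hc0 | hc0
      · have : (fun y : EuclideanSpace ℝ (Fin M × Fin 3) => C q.1 q.2 / ‖Rdiff M y q.1 q.2‖)
            = fun _ => (0 : ℝ) := by
          funext y; rw [← hc0, zero_div]
        rw [this]; exact contDiffAt_const
      · have hRx : Rdiff M x q.1 q.2 ≠ 0 := hkey x hx q hq hc0.ne'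
        have hnorm : ContDiffAt ℝ (⊤ : ℕ∞) (fun y => ‖Rdiff M y q.1 q.2‖) x := by
          have : ContDiffAt ℝ (⊤ : ℕ∞) (fun y => ‖(RdiffL M q.1 q.2) y‖) x :=
            ContDiffAt.norm ℝ ((RdiffL M q.1 q.2).contDiff.contDiffAt)
              (by rw [RdiffL_apply]; exact hRx)
          simpa only [RdiffL_apply] using this
        exact contDiffAt_const.div hnorm (norm_ne_zero_iff.2 hRx)
    exact this
  · intro x hx
    have hD : ∀ q : Fin M × Fin M, ∃ D : EuclideanSpace ℝ (Fin M × Fin 3) →L[ℝ] ℝ,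
        q ∈ P → (HasFDerivAt (fun y => C q.1 q.2 / ‖Rdiff M y q.1 q.2‖) D x ∧
          ‖D‖ ≤ Real.sqrt 2 * (C q.1 q.2 / ‖Rdiff M x q.1 q.2‖ ^ 2)) := by
      intro q
      by_cases hq : q ∈ P
      · obtain ⟨D, h1, h2⟩ := coulomb_term_deriv M q.1 q.2
          (Finset.mem_filter.1 hq).2.ne (C q.1 q.2) (hC q.1 q.2) x (hkey x hx q hq)
        exact ⟨D, fun _ => ⟨h1, h2⟩⟩
      · exact ⟨0, fun h => absurd h hq⟩
    choose D hDspec using hD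
    have hsum : HasFDerivAt (coulombUs M C) (∑ q ∈ P, D q) x := by
      have : HasFDerivAt (fun y => ∑ q ∈ P, C q.1 q.2 / ‖Rdiff M y q.1 q.2‖)
          (∑ q ∈ P, D q) x := HasFDerivAt.fun_sum fun q hq => (hDspec q hq).1
      exact this
    have hgrad : ‖gradient (coulombUs M C) x‖ = ‖∑ q ∈ P, D q‖ := by
      rw [gradient, hsum.fderiv]
      exact (InnerProductSpace.toDual ℝ _).symm.norm_map _
    rw [hgrad]
    -- nonnegativity of the terms a q = C q / r q
    have hanonneg : ∀ q ∈ P, 0 ≤ C q.1 q.2 / ‖Rdiff M x q.1 q.2‖ :=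
      fun q _ => div_nonneg (hC q.1 q.2) (norm_nonneg _)
    -- per-term bound: C/r² ≤ (C/r)²/m
    have hterm : ∀ q ∈ P, C q.1 q.2 / ‖Rdiff M x q.1 q.2‖ ^ 2
        ≤ (C q.1 q.2 / ‖Rdiff M x q.1 q.2‖) ^ 2 / m := by
      intro q hq
      rcases eq_or_lt_of_le (hC q.1 q.2) with hc0 | hc0
      · rw [← hc0, zero_div, zero_div, zero_pow (by norm_num), zero_div]
      · have hRx : Rdiff M x q.1 q.2 ≠ 0 := hkey x hx q hq hc0.ne'
        have hr : (0 : ℝ) < ‖Rdiff M x q.1 q.2‖ := norm_pos_iff.2 hRx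
        have hmC : m ≤ C q.1 q.2 := hmle q.1 q.2 (Finset.mem_filter.1 hq).2 hc0
        rw [div_pow, le_div_iff₀ hm, div_mul_eq_mul_div, div_le_div_iff₀ (by positivity)
          (by positivity)]
        calc C q.1 q.2 * m * ‖Rdiff M x q.1 q.2‖ ^ 2
            ≤ C q.1 q.2 * C q.1 q.2 * ‖Rdiff M x q.1 q.2‖ ^ 2 := by gcongr
          _ = C q.1 q.2 ^ 2 * ‖Rdiff M x q.1 q.2‖ ^ 2 := by ring
    -- sum of squares ≤ square of sum
    have hsq : ∑ q ∈ P, (C q.1 q.2 / ‖Rdiff M x q.1 q.2‖) ^ 2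
        ≤ (∑ q ∈ P, C q.1 q.2 / ‖Rdiff M x q.1 q.2‖) ^ 2 :=
      Finset.sum_sq_le_sq_sum_of_nonneg hanonneg
    calc ‖∑ q ∈ P, D q‖ ≤ ∑ q ∈ P, ‖D q‖ := norm_sum_le _ _
      _ ≤ ∑ q ∈ P, Real.sqrt 2 * (C q.1 q.2 / ‖Rdiff M x q.1 q.2‖ ^ 2) :=
          Finset.sum_le_sum fun q hq => (hDspec q hq).2
      _ = Real.sqrt 2 * ∑ q ∈ P, C q.1 q.2 / ‖Rdiff M x q.1 q.2‖ ^ 2 := by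
          rw [Finset.mul_sum]
      _ ≤ Real.sqrt 2 * ∑ q ∈ P, (C q.1 q.2 / ‖Rdiff M x q.1 q.2‖) ^ 2 / m :=
          mul_le_mul_of_nonneg_left (Finset.sum_le_sum hterm) (Real.sqrt_nonneg 2)
      _ = Real.sqrt 2 / m * ∑ q ∈ P, (C q.1 q.2 / ‖Rdiff M x q.1 q.2‖) ^ 2 := by
          rw [← Finset.sum_div]; ring
      _ ≤ Real.sqrt 2 / m * (∑ q ∈ P, C q.1 q.2 / ‖Rdiff M x q.1 q.2‖) ^ 2 := by
          exact mul_le_mul_of_nonneg_left hsq (div_nonneg (Real.sqrt_nonneg 2) hm.le)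
      _ = Real.sqrt 2 / m * (coulombUs M C x) ^ 2 := rfl
end

section
/- Let U_s be the repulsive Coulomb potential on ℝ^{3M} with singular set S and minimal nonzero coefficient m. Let (μ_n) be a sequence of finite nonnegative Borel measures on ℝ^{3M} converging weakly to a finite nonnegative Borel measure μ (i.e. ∫ f dμ_n → ∫ f dμ for every bounded continuous f : ℝ^{3M} → ℝ), and suppose there is a constant C with ∫_{ℝ^{3M}} U_s(x)² dμ_n(x) ≤ C for all n. Then for every δ > 0, μ({x : dist(x,S) ≤ δ}) ≤ (16/m²) · C · δ², and consequently μ(S) = 0. -/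
/-! If `infDist x S ≤ δ` then some pair with `C_{αβ} ≥ m` has `|R_α - R_β| ≤ 4δ` (a factor 2 from
approximating the infimum, a factor 2 from `|R_α - R_β| ≤ 2|x|`), so `U_s ≥ m / (4δ)` there and
Chebyshev's inequality for `U_s²` gives `μ_n {dist(·,S) ≤ δ} ≤ 16 C₀ δ² / m²`. A continuous cutoff
between the levels `δ` and `δ' > δ` passes this bound to the weak limit for every `δ' > δ`, hence
for `δ`; letting `δ → 0` gives `μ S = 0`. -/

open MeasureTheory Filter
open scoped ENNReal

/-- The repulsive Coulomb potential `U_s(x) = Σ_{α<β} C_{αβ}/|R_α−R_β|`, with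
values in `[0,∞]` (equal to `+∞` exactly on the singular set). -/
noncomputable def coulombUsE (M : ℕ) (C : Fin M → Fin M → ℝ)
    (x : EuclideanSpace ℝ (Fin M × Fin 3)) : ℝ≥0∞ :=
  ∑ q ∈ Finset.univ.filter (fun q : Fin M × Fin M => q.1 < q.2),
    ENNReal.ofReal (C q.1 q.2) / ENNReal.ofReal ‖Rdiff M x q.1 q.2‖

lemma EuclideanSpace.norm_toLp_apply_mk_le {ι κ : Type*} [Fintype ι] [Fintype κ]
    (z : EuclideanSpace ℝ (ι × κ)) (i : ι) :
    ‖(WithLp.toLp 2 fun j => z (i, j) : EuclideanSpace ℝ κ)‖ ≤ ‖z‖ := by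
  refine le_of_sq_le_sq ?_ (norm_nonneg z)
  rw [EuclideanSpace.norm_sq_eq, EuclideanSpace.norm_sq_eq, Fintype.sum_prod_type]
  exact Finset.single_le_sum (f := fun i => ∑ j, ‖z (i, j)‖ ^ 2)
    (fun _ _ => by positivity) (Finset.mem_univ i)

lemma measure_le_of_tendsto_integral_of_measure_le {X ι : Type*} [TopologicalSpace X]
    [MeasurableSpace X] [OpensMeasurableSpace X] {L : Filter ι} [L.NeBot]
    {μs : ι → Measure X} {μ : Measure X} [∀ i, IsFiniteMeasure (μs i)] [IsFiniteMeasure μ]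
    (hweak : ∀ f : BoundedContinuousFunction X ℝ,
      Tendsto (fun i => ∫ x, f x ∂(μs i)) L (nhds (∫ x, f x ∂μ)))
    {h : X → ℝ} (hh : Continuous h) {δ δ' : ℝ} (hδ : δ < δ') {b : ℝ≥0∞} (hb : b ≠ ∞)
    (hμs : ∀ᶠ i in L, μs i {x | h x ≤ δ'} ≤ b) :
    μ {x | h x ≤ δ} ≤ b := by
  have hmeas : ∀ r, MeasurableSet {x | h x ≤ r} := fun r =>
    measurableSet_le hh.measurable measurable_const
  set g : X → ℝ := fun x => max 0 (min 1 ((δ' - h x) / (δ' - δ)))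
  have hg_cont : Continuous g := by fun_prop
  have hg_abs : ∀ x, ‖g x‖ ≤ 1 := fun x => by
    rw [Real.norm_of_nonneg (le_max_left _ _)]
    exact max_le zero_le_one (min_le_left _ _)
  let f : BoundedContinuousFunction X ℝ :=
    BoundedContinuousFunction.ofNormedAddCommGroup g hg_cont 1 hg_abs
  have hf_ge : ∀ x, {x | h x ≤ δ}.indicator 1 x ≤ f x := fun x => by
    by_cases hx : h x ≤ δ
    · have : 1 ≤ (δ' - h x) / (δ' - δ) := by
        rw [le_div_iff₀ (sub_pos.mpr hδ)]; linarith
      simp [f, g, hx, this]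
    · simp [f, g, hx]
  have hf_le : ∀ x, f x ≤ {x | h x ≤ δ'}.indicator 1 x := fun x => by
    by_cases hx : h x ≤ δ'
    · simpa [hx] using (le_abs_self (f x)).trans (hg_abs x)
    · have : (δ' - h x) / (δ' - δ) ≤ 0 :=
        div_nonpos_of_nonpos_of_nonneg (by linarith) (by linarith)
      simp [f, g, hx, this]
  have hμ_le : μ.real {x | h x ≤ δ} ≤ ∫ x, f x ∂μ := by
    rw [← integral_indicator_one (hmeas δ)]
    exact integral_mono ((integrable_const 1).indicator (hmeas δ)) (f.integrable μ) hf_ge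
  have hlim : ∫ x, f x ∂μ ≤ b.toReal := by
    refine le_of_tendsto (hweak f) (hμs.mono fun i hi => ?_)
    calc ∫ x, f x ∂(μs i) ≤ (μs i).real {x | h x ≤ δ'} := by
          rw [← integral_indicator_one (hmeas δ')]
          exact integral_mono (f.integrable _) ((integrable_const 1).indicator (hmeas δ')) hf_le
      _ ≤ b.toReal := ENNReal.toReal_mono hb hi
  calc μ {x | h x ≤ δ} = ENNReal.ofReal (μ.real {x | h x ≤ δ}) := (ofReal_measureReal).symm
    _ ≤ ENNReal.ofReal b.toReal := ENNReal.ofReal_le_ofReal (hμ_le.trans hlim)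
    _ = b := ENNReal.ofReal_toReal hb

lemma ENNReal.le_ofReal_of_forall_gt {a : ℝ≥0∞} {f : ℝ → ℝ} {x : ℝ}
    (hf : ContinuousWithinAt f (Set.Ioi x) x) (h : ∀ y > x, a ≤ ENNReal.ofReal (f y)) :
    a ≤ ENNReal.ofReal (f x) :=
  ge_of_tendsto ((ENNReal.continuous_ofReal.tendsto _).comp hf)
    (eventually_nhdsWithin_of_forall h)

lemma Rdiff_sub (M : ℕ) (x y : EuclideanSpace ℝ (Fin M × Fin 3)) (α β : Fin M) :
    Rdiff M (x - y) α β = Rdiff M x α β - Rdiff M y α β := by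
  ext j
  simp only [Rdiff, PiLp.sub_apply]
  ring

lemma norm_Rdiff_le (M : ℕ) (z : EuclideanSpace ℝ (Fin M × Fin 3)) (α β : Fin M) :
    ‖Rdiff M z α β‖ ≤ 2 * ‖z‖ := by
  have hsplit : Rdiff M z α β = (WithLp.toLp 2 fun j => z (α, j) : EuclideanSpace ℝ (Fin 3))
      - WithLp.toLp 2 fun j => z (β, j) := rfl
  rw [hsplit]
  linarith [norm_sub_le (WithLp.toLp 2 fun j => z (α, j) : EuclideanSpace ℝ (Fin 3))
      (WithLp.toLp 2 fun j => z (β, j)), EuclideanSpace.norm_toLp_apply_mk_le z α,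
    EuclideanSpace.norm_toLp_apply_mk_le z β]

lemma norm_Rdiff_le_two_mul_dist {M : ℕ} {x y : EuclideanSpace ℝ (Fin M × Fin 3)} {α β : Fin M}
    (hy : Rdiff M y α β = 0) : ‖Rdiff M x α β‖ ≤ 2 * dist x y := by
  simpa [dist_eq_norm, Rdiff_sub, hy] using norm_Rdiff_le M (x - y) α β

lemma measurable_coulombUsE (M : ℕ) (C : Fin M → Fin M → ℝ) : Measurable (coulombUsE M C) := by
  unfold coulombUsE Rdiff
  fun_prop

lemma ofReal_div_le_coulombUsE {M : ℕ} {C : Fin M → Fin M → ℝ}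
    (hne : ∃ α β : Fin M, α < β ∧ 0 < C α β) {m : ℝ}
    (hmle : ∀ α β : Fin M, α < β → 0 < C α β → m ≤ C α β) {δ : ℝ} (hδ : 0 < δ)
    {x : EuclideanSpace ℝ (Fin M × Fin 3)} (hx : Metric.infDist x (singSet M C) ≤ δ) :
    ENNReal.ofReal (m / (4 * δ)) ≤ coulombUsE M C x := by
  obtain ⟨α₀, β₀, hαβ₀, hCαβ₀⟩ := hne
  have hS : (singSet M C).Nonempty := ⟨0, α₀, β₀, hαβ₀, hCαβ₀, by ext j; simp [Rdiff]⟩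
  obtain ⟨y, ⟨α, β, hαβ, hCαβ, hy⟩, hxy⟩ :=
    (Metric.infDist_lt_iff hS).mp (hx.trans_lt (by linarith : δ < 2 * δ))
  have hnorm : ‖Rdiff M x α β‖ ≤ 4 * δ := by
    linarith [norm_Rdiff_le_two_mul_dist (x := x) hy]
  calc ENNReal.ofReal (m / (4 * δ))
      ≤ ENNReal.ofReal (C α β) / ENNReal.ofReal ‖Rdiff M x α β‖ := by
        rw [ENNReal.ofReal_div_of_pos (by positivity)]
        exact ENNReal.div_le_div (ENNReal.ofReal_le_ofReal (hmle α β hαβ hCαβ))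
          (ENNReal.ofReal_le_ofReal hnorm)
    _ ≤ coulombUsE M C x :=
        Finset.single_le_sum (a := (α, β)) (f := fun q : Fin M × Fin M =>
            ENNReal.ofReal (C q.1 q.2) / ENNReal.ofReal ‖Rdiff M x q.1 q.2‖)
          (fun _ _ => zero_le) (by simp [hαβ])

lemma measure_infDist_singSet_le {M : ℕ} {C : Fin M → Fin M → ℝ}
    (hne : ∃ α β : Fin M, α < β ∧ 0 < C α β) {m : ℝ} (hm : 0 < m)
    (hmle : ∀ α β : Fin M, α < β → 0 < C α β → m ≤ C α β)
    (μ : Measure (EuclideanSpace ℝ (Fin M × Fin 3))) {C₀ : ℝ}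
    (hC₀ : ∫⁻ x, (coulombUsE M C x) ^ 2 ∂μ ≤ ENNReal.ofReal C₀) {δ : ℝ} (hδ : 0 < δ) :
    μ {x | Metric.infDist x (singSet M C) ≤ δ} ≤ ENNReal.ofReal ((16 / m ^ 2) * C₀ * δ ^ 2) := by
  set a : ℝ := m / (4 * δ)
  have ha : 0 < a := by positivity
  calc μ {x | Metric.infDist x (singSet M C) ≤ δ}
      ≤ μ {x | ENNReal.ofReal (a ^ 2) ≤ coulombUsE M C x ^ 2} := by
        refine measure_mono fun x hx => ?_
        rw [ENNReal.ofReal_pow ha.le]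
        exact pow_le_pow_left₀ zero_le (ofReal_div_le_coulombUsE hne hmle hδ hx) 2
    _ ≤ (∫⁻ x, coulombUsE M C x ^ 2 ∂μ) / ENNReal.ofReal (a ^ 2) :=
        meas_ge_le_lintegral_div ((measurable_coulombUsE M C).pow_const 2).aemeasurable
          (ENNReal.ofReal_pos.mpr (by positivity)).ne' ENNReal.ofReal_ne_top
    _ ≤ ENNReal.ofReal C₀ / ENNReal.ofReal (a ^ 2) := by gcongr
    _ = ENNReal.ofReal ((16 / m ^ 2) * C₀ * δ ^ 2) := by
        rw [← ENNReal.ofReal_div_of_pos (by positivity)]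
        congr 1
        simp only [a]
        field_simp
        ring

theorem coulomb_no_concentration_general (M : ℕ) (C : Fin M → Fin M → ℝ)
    (hne : ∃ α β : Fin M, α < β ∧ 0 < C α β)
    (m : ℝ) (hm : 0 < m)
    (hmle : ∀ α β : Fin M, α < β → 0 < C α β → m ≤ C α β)
    (μseq : ℕ → Measure (EuclideanSpace ℝ (Fin M × Fin 3)))
    (μ : Measure (EuclideanSpace ℝ (Fin M × Fin 3)))
    [∀ n, IsFiniteMeasure (μseq n)] [IsFiniteMeasure μ]
    (hweak : ∀ f : BoundedContinuousFunction (EuclideanSpace ℝ (Fin M × Fin 3)) ℝ,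
      Tendsto (fun n => ∫ x, f x ∂(μseq n)) atTop (nhds (∫ x, f x ∂μ)))
    (C₀ : ℝ)
    (hC₀ : ∀ n, ∫⁻ x, (coulombUsE M C x) ^ 2 ∂(μseq n) ≤ ENNReal.ofReal C₀) :
    (∀ δ > 0, μ {x | Metric.infDist x (singSet M C) ≤ δ} ≤
        ENNReal.ofReal ((16 / m ^ 2) * C₀ * δ ^ 2)) ∧
      μ (singSet M C) = 0 := by
  have hbound_cont : Continuous fun δ : ℝ => (16 / m ^ 2) * C₀ * δ ^ 2 := by fun_prop
  have hμ : ∀ δ > 0, μ {x | Metric.infDist x (singSet M C) ≤ δ} ≤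
      ENNReal.ofReal ((16 / m ^ 2) * C₀ * δ ^ 2) := fun δ hδ =>
    ENNReal.le_ofReal_of_forall_gt (f := fun δ => (16 / m ^ 2) * C₀ * δ ^ 2)
      hbound_cont.continuousWithinAt fun δ' hδ' =>
      measure_le_of_tendsto_integral_of_measure_le hweak (Metric.continuous_infDist_pt _) hδ'
        ENNReal.ofReal_ne_top (Eventually.of_forall fun n =>
          measure_infDist_singSet_le hne hm hmle (μseq n) (hC₀ n) (hδ.trans hδ'))
  refine ⟨hμ, ?_⟩
  have hS : μ (singSet M C) ≤ ENNReal.ofReal ((16 / m ^ 2) * C₀ * 0 ^ 2) :=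
    ENNReal.le_ofReal_of_forall_gt (f := fun δ => (16 / m ^ 2) * C₀ * δ ^ 2)
      hbound_cont.continuousWithinAt fun δ hδ =>
      (measure_mono fun x hx => (Metric.infDist_zero_of_mem hx).trans_le hδ.le).trans (hμ δ hδ)
  simpa using hS

/-- No-concentration estimate: if finite nonnegative measures `μ_n` converge weakly
to `μ` and `∫ U_s² dμ_n ≤ C₀` uniformly, then `μ{dist(·,S) ≤ δ} ≤ (16/m²) C₀ δ²`
for every `δ > 0`, and consequently `μ(S) = 0`.  Here `m` is a (positive) lower
bound for the nonzero coefficients `C_{αβ}` — in particular one may take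
`m = min{C_{αβ} : C_{αβ} > 0}`. -/
theorem coulomb_no_concentration (M : ℕ) (hM : 2 ≤ M) (C : Fin M → Fin M → ℝ)
    (hC : ∀ α β : Fin M, 0 ≤ C α β)
    (hne : ∃ α β : Fin M, α < β ∧ 0 < C α β)
    (m : ℝ) (hm : 0 < m)
    (hmle : ∀ α β : Fin M, α < β → 0 < C α β → m ≤ C α β)
    (μseq : ℕ → Measure (EuclideanSpace ℝ (Fin M × Fin 3)))
    (μ : Measure (EuclideanSpace ℝ (Fin M × Fin 3)))
    [∀ n, IsFiniteMeasure (μseq n)] [IsFiniteMeasure μ]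
    (hweak : ∀ f : BoundedContinuousFunction (EuclideanSpace ℝ (Fin M × Fin 3)) ℝ,
      Tendsto (fun n => ∫ x, f x ∂(μseq n)) atTop (nhds (∫ x, f x ∂μ)))
    (C₀ : ℝ)
    (hC₀ : ∀ n, ∫⁻ x, (coulombUsE M C x) ^ 2 ∂(μseq n) ≤ ENNReal.ofReal C₀) :
    (∀ δ > 0, μ {x | Metric.infDist x (singSet M C) ≤ δ} ≤
        ENNReal.ofReal ((16 / m ^ 2) * C₀ * δ ^ 2)) ∧
      μ (singSet M C) = 0 :=
  coulomb_no_concentration_general M C hne m hm hmle μseq μ hweak C₀ hC₀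
end
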